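/- Let n ≥ 4 and let C_{I;j} be a k-CNOT gate on n wires with control set I of size k, where 3 ≤ k < n and j ∉ I. Then there exists a reversible circuit S on n + (k − 2) wires consisting of exactly 2k − 3 gates, each of which is a 2-CNOT gate, whose permutation g satisfies g(φ_{n,n+k−2}(x)) = φ_{n,n+k−2}(C_{I;j}(x)) for all x ∈ Z2^n; in particular all k − 2 additional outputs return to the value 0. -/

import Mathlib

/-- The k-CNOT gate on `m` wires with control set `I` (with `j` removed, so that when
`j ∉ I` this is exactly the gate `C_{I;j}`): it replaces coordinate `j` of `x` by
`x j + ∏ i ∈ I.erase j, x i` and leaves all other coordinates unchanged.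
With `I = ∅` this is the gate NOT_j, with `I = {i}`, `i ≠ j`, the gate CNOT_{i;j},
and with `I = {i1, i2}`, `i1, i2, j` pairwise distinct, the gate 2-CNOT_{i1,i2;j}. -/
def kcnot (m : ℕ) (I : Finset (Fin m)) (j : Fin m) : Equiv.Perm (Fin m → ZMod 2) :=
  Function.Involutive.toPerm
    (fun x => Function.update x j (x j + ∏ i ∈ I.erase j, x i))
    (by
      intro x
      have ht : ∀ (y : Fin m → ZMod 2) (v : ZMod 2),
          ∏ i ∈ I.erase j, (Function.update y j v) i = ∏ i ∈ I.erase j, y i :=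
        fun y v => Finset.prod_congr rfl fun i hi =>
          Function.update_of_ne (Finset.ne_of_mem_erase hi) _ _
      have h2 : ∀ a : ZMod 2, a + a = 0 := by decide
      funext y
      by_cases hy : y = j
      · subst hy
        simp [Function.update_self, ht, add_assoc, h2]
      · simp [Function.update_of_ne hy])

/-- The set Ω_n^2 of all gates NOT, CNOT and 2-CNOT on `n` wires, viewed as
permutations of the Boolean cube `Fin n → ZMod 2`. -/
def gateSet (n : ℕ) : Set (Equiv.Perm (Fin n → ZMod 2)) :=
  {g | ∃ (I : Finset (Fin n)) (j : Fin n), I.card ≤ 2 ∧ j ∉ I ∧ g = kcnot n I j}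

/-- The permutation defined by a reversible circuit (a list of gates applied in
list order: the head of the list is applied first). -/
def circuitPerm {n : ℕ} (l : List (Equiv.Perm (Fin n → ZMod 2))) :
    Equiv.Perm (Fin n → ZMod 2) :=
  l.reverse.prod

/-- The extending map φ_{n,n+q} appending `q` zero coordinates. -/
def extendMap (n q : ℕ) (x : Fin n → ZMod 2) : Fin (n + q) → ZMod 2 :=
  fun i => if h : (i : ℕ) < n then x ⟨i, h⟩ else 0

/-- The reducing map ψ^π sending `y` to `(y (π 1), …, y (π n))`. -/
def reduceMap (n q : ℕ) (π : Equiv.Perm (Fin (n + q))) (y : Fin (n + q) → ZMod 2) :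
    Fin n → ZMod 2 :=
  fun i => y (π (Fin.castAdd q i))

/-- A map `f : Z2^n → Z2^n` is realized by some reversible circuit on `n + q` wires
using `q` additional inputs.  `F(n,q)` is the set of all such maps. -/
def Realizes (n q : ℕ) (f : (Fin n → ZMod 2) → (Fin n → ZMod 2)) : Prop :=
  ∃ l : List (Equiv.Perm (Fin (n + q) → ZMod 2)),
    (∀ g ∈ l, g ∈ gateSet (n + q)) ∧
    ∃ π : Equiv.Perm (Fin (n + q)),
      ∀ x, reduceMap n q π (circuitPerm l (extendMap n q x)) = f x

/-- `L(f,q)`: the minimal complexity of a reversible circuit realizing `f` using `q`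
additional inputs. -/
noncomputable def Lfq (n q : ℕ) (f : (Fin n → ZMod 2) → (Fin n → ZMod 2)) : ℕ :=
  sInf {m | ∃ l : List (Equiv.Perm (Fin (n + q) → ZMod 2)),
    l.length = m ∧ (∀ g ∈ l, g ∈ gateSet (n + q)) ∧
    ∃ π : Equiv.Perm (Fin (n + q)),
      ∀ x, reduceMap n q π (circuitPerm l (extendMap n q x)) = f x}

/-- The Shannon function `L(n,q) = max_{f ∈ F(n,q)} L(f,q)`. -/
noncomputable def shannonL (n q : ℕ) : ℕ :=
  sSup (Lfq n q '' {f | Realizes n q f})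

/-!
A `k`-CNOT is built by induction on the number of controls. The first gate writes the AND of
two controls `c₀, c₁` into a fresh zero ancilla `a`; the `k`-CNOT with control set
`I ∖ {c₀, c₁} ∪ {a}` then flips the target exactly when the original one does, and
repeating the first gate restores `a` to `0`. The gate count therefore grows by `2` per
control, starting from a single 2-CNOT for two controls, which gives `2k − 3`.
-/

open Function

def IsToffoliGate {m : ℕ} (g : Equiv.Perm (Fin m → ZMod 2)) : Prop :=
  ∃ (I : Finset (Fin m)) (j : Fin m), I.card = 2 ∧ j ∉ I ∧ g = kcnot m I j

section Circuit

variable {m : ℕ}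

lemma circuitPerm_cons (g : Equiv.Perm (Fin m → ZMod 2)) (l : List (Equiv.Perm (Fin m → ZMod 2))) :
    circuitPerm (g :: l) = circuitPerm l * g := by
  simp [circuitPerm]

lemma circuitPerm_append (l₁ l₂ : List (Equiv.Perm (Fin m → ZMod 2))) :
    circuitPerm (l₁ ++ l₂) = circuitPerm l₂ * circuitPerm l₁ := by
  simp [circuitPerm]

lemma circuitPerm_singleton (g : Equiv.Perm (Fin m → ZMod 2)) : circuitPerm [g] = g := by
  simp [circuitPerm]

end Circuit

section Kcnot

variable {m : ℕ} {I : Finset (Fin m)} {j : Fin m}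

lemma kcnot_apply (x : Fin m → ZMod 2) :
    kcnot m I j x = update x j (x j + ∏ i ∈ I.erase j, x i) := rfl

lemma kcnot_apply_of_notMem (hj : j ∉ I) (x : Fin m → ZMod 2) :
    kcnot m I j x = update x j (x j + ∏ i ∈ I, x i) := by
  rw [kcnot_apply, Finset.erase_eq_of_notMem hj]

lemma kcnot_apply_of_ne {w : Fin m} (hw : w ≠ j) (x : Fin m → ZMod 2) :
    kcnot m I j x w = x w :=
  update_of_ne hw _ _

lemma kcnot_kcnot (x : Fin m → ZMod 2) : kcnot m I j (kcnot m I j x) = x :=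
  (kcnot m I j).symm_apply_apply x

lemma kcnot_update_of_notMem {w : Fin m} (hwI : w ∉ I) (hwj : w ≠ j)
    (x : Fin m → ZMod 2) (v : ZMod 2) :
    kcnot m I j (update x w v) = update (kcnot m I j x) w v := by
  have hprod : ∏ i ∈ I.erase j, update x w v i = ∏ i ∈ I.erase j, x i :=
    Finset.prod_congr rfl fun i hi =>
      update_of_ne (ne_of_mem_of_not_mem (Finset.mem_of_mem_erase hi) hwI) _ _
  rw [kcnot_apply, kcnot_apply, hprod, update_of_ne hwj.symm]
  exact update_comm hwj v _ x

lemma kcnot_pair_conj_kcnot {S : Finset (Fin m)} {c₀ c₁ a : Fin m} (hc₀ : c₀ ∈ S) (hc₁ : c₁ ∈ S)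
    (hc : c₀ ≠ c₁) (haS : a ∉ S) (hjS : j ∉ S) (hja : j ≠ a) (y : Fin m → ZMod 2)
    (hya : y a = 0) :
    kcnot m {c₀, c₁} a (kcnot m (insert a ((S.erase c₀).erase c₁)) j (kcnot m {c₀, c₁} a y)) =
      kcnot m S j y := by
  have hpair : {c₀, c₁} ⊆ S := Finset.insert_subset hc₀ (Finset.singleton_subset_iff.2 hc₁)
  have hR : (S.erase c₀).erase c₁ ⊆ S := (Finset.erase_subset _ _).trans (Finset.erase_subset _ _)
  have hac : a ∉ ({c₀, c₁} : Finset (Fin m)) := fun h => haS (hpair h)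
  have haR : a ∉ (S.erase c₀).erase c₁ := fun h => haS (hR h)
  have hjS' : j ∉ insert a ((S.erase c₀).erase c₁) := by
    rw [Finset.mem_insert, not_or]
    exact ⟨hja, fun h => hjS (hR h)⟩
  set y₁ := kcnot m {c₀, c₁} a y with hy₁
  have hy₁a : y₁ a = ∏ i ∈ {c₀, c₁}, y i := by
    rw [hy₁, kcnot_apply_of_notMem hac, update_self, hya, zero_add]
  have hprod : ∏ i ∈ insert a ((S.erase c₀).erase c₁), y₁ i = ∏ i ∈ S, y i := by
    rw [Finset.prod_insert haR, hy₁a,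
      Finset.prod_congr rfl fun i hi => kcnot_apply_of_ne (ne_of_mem_of_not_mem hi haR) y,
      Finset.prod_pair hc, mul_assoc, Finset.mul_prod_erase _ _ (Finset.mem_erase.2 ⟨hc.symm, hc₁⟩),
      Finset.mul_prod_erase _ _ hc₀]
  rw [kcnot_apply_of_notMem hjS', hprod, hy₁, kcnot_apply_of_ne hja,
    kcnot_update_of_notMem (fun h => hjS (hpair h)) hja, kcnot_kcnot, kcnot_apply_of_notMem hjS]

end Kcnot

theorem exists_toffoli_circuit_eq_kcnot {m : ℕ} (k : ℕ) (S A : Finset (Fin m)) (j : Fin m)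
    (hS : S.card = k + 2) (hA : k ≤ A.card) (hSA : Disjoint S A) (hjS : j ∉ S) (hjA : j ∉ A) :
    ∃ l : List (Equiv.Perm (Fin m → ZMod 2)), l.length = 2 * k + 1 ∧
      (∀ g ∈ l, IsToffoliGate g) ∧
      ∀ y : Fin m → ZMod 2, (∀ a ∈ A, y a = 0) → circuitPerm l y = kcnot m S j y := by
  induction k generalizing S A with
  | zero =>
    refine ⟨[kcnot m S j], rfl, ?_, fun y _ => circuitPerm_singleton _ ▸ rfl⟩
    simp only [List.mem_singleton, forall_eq]
    exact ⟨S, j, hS, hjS, rfl⟩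
  | succ k ih =>
    obtain ⟨c₀, hc₀, c₁, hc₁, hc⟩ := Finset.one_lt_card.1 (by omega : 1 < S.card)
    obtain ⟨a, ha⟩ := Finset.card_pos.1 (by omega : 0 < A.card)
    have haS : a ∉ S := Finset.disjoint_right.1 hSA ha
    have hja : j ≠ a := fun h => hjA (h ▸ ha)
    have hR : (S.erase c₀).erase c₁ ⊆ S := (Finset.erase_subset _ _).trans (Finset.erase_subset _ _)
    set S' := insert a ((S.erase c₀).erase c₁)
    have hS' : S'.card = k + 2 := by
      rw [Finset.card_insert_of_notMem fun h => haS (hR h),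
        Finset.card_erase_of_mem (Finset.mem_erase.2 ⟨hc.symm, hc₁⟩),
        Finset.card_erase_of_mem hc₀, hS]
      omega
    have hA' : k ≤ (A.erase a).card := by
      rw [Finset.card_erase_of_mem ha]; omega
    have hSA' : Disjoint S' (A.erase a) :=
      Finset.disjoint_insert_left.2 ⟨Finset.notMem_erase a A, Finset.disjoint_of_subset_left hR
        (Finset.disjoint_of_subset_right (Finset.erase_subset _ _) hSA)⟩
    have hjS' : j ∉ S' := by
      rw [Finset.mem_insert, not_or]
      exact ⟨hja, fun h => hjS (hR h)⟩
    obtain ⟨l, hlen, hgates, hl⟩ :=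
      ih S' (A.erase a) hS' hA' hSA' hjS' fun h => hjA (Finset.mem_of_mem_erase h)
    set g := kcnot m {c₀, c₁} a
    have hg : IsToffoliGate g := ⟨{c₀, c₁}, a, Finset.card_pair hc,
      fun h => haS (Finset.insert_subset hc₀ (Finset.singleton_subset_iff.2 hc₁) h), rfl⟩
    refine ⟨g :: l ++ [g], ?_, ?_, fun y hy => ?_⟩
    · simp only [List.length_append, List.length_cons, List.length_nil, hlen]
      omega
    · simp only [List.mem_append, List.mem_cons, List.not_mem_nil, or_false]
      rintro g' ((rfl | hg') | rfl)
      exacts [hg, hgates g' hg', hg]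
    · have hgy : ∀ b ∈ A.erase a, g y b = 0 := fun b hb =>
        (kcnot_apply_of_ne (Finset.ne_of_mem_erase hb) y).trans (hy b (Finset.mem_of_mem_erase hb))
      rw [circuitPerm_append, circuitPerm_singleton, circuitPerm_cons, Equiv.Perm.mul_apply,
        Equiv.Perm.mul_apply, hl _ hgy]
      exact kcnot_pair_conj_kcnot hc₀ hc₁ hc haS hjS hja y (hy a ha)

section Extend

variable {n q : ℕ}

lemma Fin.castAdd_ne_natAdd (i : Fin n) (j : Fin q) : Fin.castAdd q i ≠ Fin.natAdd n j :=
  Fin.ne_of_val_ne (by simp only [Fin.val_castAdd, Fin.val_natAdd]; omega)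

@[simp]
lemma extendMap_castAdd (x : Fin n → ZMod 2) (i : Fin n) :
    extendMap n q x (Fin.castAdd q i) = x i := by
  simp [extendMap]

@[simp]
lemma extendMap_natAdd (x : Fin n → ZMod 2) (i : Fin q) :
    extendMap n q x (Fin.natAdd n i) = 0 := by
  simp [extendMap]

lemma extendMap_kcnot (I : Finset (Fin n)) (j : Fin n) (x : Fin n → ZMod 2) :
    extendMap n q (kcnot n I j x) =
      kcnot (n + q) (I.map (Fin.castAddEmb q)) (Fin.castAdd q j) (extendMap n q x) := by
  have hprod : ∏ i ∈ (I.map (Fin.castAddEmb q)).erase (Fin.castAdd q j), extendMap n q x i =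
      ∏ i ∈ I.erase j, x i := by
    rw [← Fin.coe_castAddEmb, ← Finset.map_erase, Finset.prod_map]
    simp
  ext w
  induction w using Fin.addCases with
  | left i =>
    rw [kcnot_apply, kcnot_apply, hprod, extendMap_castAdd,
      update_apply_of_injective _ (Fin.castAdd_injective n q)]
    simp
  | right i =>
    rw [kcnot_apply, kcnot_apply, extendMap_natAdd, update_of_ne, extendMap_natAdd]
    exact (Fin.castAdd_ne_natAdd j i).symm

end Extend

theorem stmt17_general (n k : ℕ) (hk3 : 3 ≤ k)
    (I : Finset (Fin n)) (hI : I.card = k) (j : Fin n) (hj : j ∉ I) :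
    ∃ l : List (Equiv.Perm (Fin (n + (k - 2)) → ZMod 2)),
      l.length = 2 * k - 3 ∧
      (∀ g ∈ l, ∃ (I' : Finset (Fin (n + (k - 2)))) (j' : Fin (n + (k - 2))),
        I'.card = 2 ∧ j' ∉ I' ∧ g = kcnot (n + (k - 2)) I' j') ∧
      ∀ x : Fin n → ZMod 2,
        circuitPerm l (extendMap n (k - 2) x) = extendMap n (k - 2) (kcnot n I j x) := by
  have hcard : (I.map (Fin.castAddEmb (k - 2))).card = k - 2 + 2 := by
    rw [Finset.card_map, hI]; omega
  have hdisj : Disjoint (I.map (Fin.castAddEmb (k - 2))) (Finset.univ.map (Fin.natAddEmb n)) := by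
    simp [Finset.disjoint_left, (Fin.castAdd_ne_natAdd _ _).symm]
  obtain ⟨l, hlen, hgates, hl⟩ :=
    exists_toffoli_circuit_eq_kcnot (k - 2) _ _ (Fin.castAdd (k - 2) j) hcard (by simp) hdisj (by simpa using hj) (by simp [(Fin.castAdd_ne_natAdd _ _).symm])
  refine ⟨l, by omega, hgates, fun x => ?_⟩
  rw [hl _ (by simp), extendMap_kcnot]

/-- A `k`-CNOT gate (`3 ≤ k < n`) can be replaced, using `k − 2` additional inputs,
by a composition of exactly `2k − 3` gates 2-CNOT, with all additional outputs
returning to the value 0. -/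
theorem stmt17 (n k : ℕ) (hn : 4 ≤ n) (hk3 : 3 ≤ k) (hkn : k < n)
    (I : Finset (Fin n)) (hI : I.card = k) (j : Fin n) (hj : j ∉ I) :
    ∃ l : List (Equiv.Perm (Fin (n + (k - 2)) → ZMod 2)),
      l.length = 2 * k - 3 ∧
      (∀ g ∈ l, ∃ (I' : Finset (Fin (n + (k - 2)))) (j' : Fin (n + (k - 2))),
        I'.card = 2 ∧ j' ∉ I' ∧ g = kcnot (n + (k - 2)) I' j') ∧
      ∀ x : Fin n → ZMod 2,
        circuitPerm l (extendMap n (k - 2) x) = extendMap n (k - 2) (kcnot n I j x) :=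
  stmt17_general n k hk3 I hI j hj
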